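/- Let y : ℕⁿ → ℝ with y₀ = 1 be such that M_d(y) is positive definite and has the product form property. For each variable index i, let (q^{(i)}_k)_{k ≤ d} be the univariate orthonormal polynomials associated with the univariate moment sequence k ↦ y_{k·e_i} (e_i the i-th unit multi-index). Then the multivariate orthonormal polynomials factor as products of univariate ones: p_α(X) = q^{(1)}_{α₁}(X₁)·q^{(2)}_{α₂}(X₂)⋯q^{(n)}_{αₙ}(Xₙ) for every α with |α| ≤ d. -/

import Mathlib

open scoped BigOperators
open MvPolynomial Matrix

namespace Paper

/-- Total degree `|α|` of a multi-index `α`. -/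
def degSum {n : ℕ} (α : Fin n → ℕ) : ℕ := ∑ i, α i

lemma apply_le_degSum {n : ℕ} (α : Fin n → ℕ) (i : Fin n) : α i ≤ degSum α :=
  Finset.single_le_sum (fun _ _ => Nat.zero_le _) (Finset.mem_univ i)

noncomputable instance midxFintype (n d : ℕ) : Fintype {α : Fin n → ℕ // degSum α ≤ d} :=
  Fintype.ofInjective
    (fun a => (fun i => (⟨a.1 i, Nat.lt_succ_of_le (le_trans (apply_le_degSum a.1 i) a.2)⟩ :
        Fin (d+1))))
    (fun a b h => Subtype.ext (funext fun i => congrArg Fin.val (congrFun h i)))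

/-- The index set of the truncated moment matrix: multi-indices of total degree at most `d`. -/
abbrev MIdx (n d : ℕ) := {α : Fin n → ℕ // degSum α ≤ d}

/-- The truncated moment matrix `M_d(y)`. -/
def momMat (n d : ℕ) (y : (Fin n → ℕ) → ℝ) : Matrix (MIdx n d) (MIdx n d) ℝ :=
  Matrix.of fun a b => y (a.1 + b.1)

/-- The Riesz functional `L_y` on multivariate polynomials. -/
noncomputable def Ly {n : ℕ} (y : (Fin n → ℕ) → ℝ) (p : MvPolynomial (Fin n) ℝ) : ℝ :=
  ∑ m ∈ p.support, p.coeff m * y (fun i => m i)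

/-- The monomial `X^α`. -/
noncomputable def mono {n : ℕ} (α : Fin n → ℕ) : MvPolynomial (Fin n) ℝ := ∏ i, X i ^ α i

/-- The coefficient of `X^γ` in `p`. -/
noncomputable def coeffOf {n : ℕ} (p : MvPolynomial (Fin n) ℝ) (γ : Fin n → ℕ) : ℝ :=
  p.coeff (Finsupp.equivFunOnFinite.symm γ)

/-- Strict lexicographic order on multi-indices. -/
def lexLT {n : ℕ} (α β : Fin n → ℕ) : Prop :=
  ∃ i, (∀ j, j < i → α j = β j) ∧ α i < β i

/-- Strict graded lexicographic (GLex) order on multi-indices. -/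
def glexLT {n : ℕ} (α β : Fin n → ℕ) : Prop :=
  degSum α < degSum β ∨ (degSum α = degSum β ∧ lexLT α β)

/-- Graded lexicographic order (reflexive version). -/
def glexLE {n : ℕ} (α β : Fin n → ℕ) : Prop := glexLT α β ∨ α = β

/-- The product form (independence) property of `M_d(y)`:
`L_y(X^α) = ∏_i L_y(X_i^{α_i})` for all `|α| ≤ 2d`. -/
def ProductForm (n d : ℕ) (y : (Fin n → ℕ) → ℝ) : Prop :=
  ∀ α : Fin n → ℕ, degSum α ≤ 2*d → y α = ∏ i, y (Pi.single i (α i))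

/-- The family of orthonormal polynomials `(p_α)_{|α| ≤ d}` associated with `y`:
GLex-triangular, orthonormal, orthogonal to lower monomials, positive leading term. -/
structure IsONFamily (n d : ℕ) (y : (Fin n → ℕ) → ℝ)
    (p : (Fin n → ℕ) → MvPolynomial (Fin n) ℝ) : Prop where
  span : ∀ α, degSum α ≤ d → ∀ γ : Fin n → ℕ, coeffOf (p α) γ ≠ 0 → glexLE γ α
  orth : ∀ α β, degSum α ≤ d → degSum β ≤ d →
    Ly y (p α * p β) = if α = β then 1 else 0
  lower : ∀ α β, degSum α ≤ d → degSum β ≤ d → glexLT β α → Ly y (p α * mono β) = 0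
  pos : ∀ α, degSum α ≤ d → 0 < Ly y (p α * mono α)


/-- Riesz functional for a univariate moment sequence. -/
noncomputable def L1 (m : ℕ → ℝ) (q : Polynomial ℝ) : ℝ :=
  ∑ k ∈ q.support, q.coeff k * m k

/-- Univariate orthonormal polynomials `(q_k)_{k ≤ d}` for a moment sequence `m`:
`deg q_k = k`, orthonormality, positive leading coefficient. -/
structure IsONFamily1 (d : ℕ) (m : ℕ → ℝ) (q : ℕ → Polynomial ℝ) : Prop where
  degle : ∀ k, k ≤ d → (q k).natDegree ≤ k
  orth : ∀ k l, k ≤ d → l ≤ d → L1 m (q k * q l) = if k = l then 1 else 0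
  lead : ∀ k, k ≤ d → 0 < (q k).coeff k

/-! ### Auxiliary lemmas -/

section Aux
variable {n : ℕ}

lemma coe_symmFun (g : Fin n → ℕ) : ⇑(Finsupp.equivFunOnFinite.symm g) = g :=
  Finsupp.equivFunOnFinite.apply_symm_apply g

lemma coeffOf_eq_coeff (p : MvPolynomial (Fin n) ℝ) (m : Fin n →₀ ℕ) :
    coeffOf p ⇑m = p.coeff m := by
  rw [coeffOf, Finsupp.equivFunOnFinite_symm_coe]

/-! #### Linearity of `Ly` -/

lemma Ly_eq_sum_subset (y : (Fin n → ℕ) → ℝ) (p : MvPolynomial (Fin n) ℝ)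
    (s : Finset (Fin n →₀ ℕ)) (h : p.support ⊆ s) :
    Ly y p = ∑ m ∈ s, p.coeff m * y (fun i => m i) := by
  rw [Ly]
  exact Finset.sum_subset h fun m _ hm => by
    simp [MvPolynomial.notMem_support_iff.mp hm]

lemma Ly_zero (y : (Fin n → ℕ) → ℝ) : Ly y 0 = 0 := by simp [Ly]

lemma Ly_add (y : (Fin n → ℕ) → ℝ) (p q : MvPolynomial (Fin n) ℝ) :
    Ly y (p + q) = Ly y p + Ly y q := by
  classical
  rw [Ly_eq_sum_subset y (p + q) (p.support ∪ q.support) MvPolynomial.support_add,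
    Ly_eq_sum_subset y p (p.support ∪ q.support) Finset.subset_union_left,
    Ly_eq_sum_subset y q (p.support ∪ q.support) Finset.subset_union_right,
    ← Finset.sum_add_distrib]
  refine Finset.sum_congr rfl fun m _ => ?_
  rw [MvPolynomial.coeff_add]; ring

lemma Ly_smul (y : (Fin n → ℕ) → ℝ) (c : ℝ) (p : MvPolynomial (Fin n) ℝ) :
    Ly y (c • p) = c * Ly y p := by
  rw [Ly_eq_sum_subset y (c • p) p.support MvPolynomial.support_smul, Ly, Finset.mul_sum]
  refine Finset.sum_congr rfl fun m _ => ?_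
  rw [MvPolynomial.coeff_smul]; simp [mul_assoc]

lemma Ly_sum (y : (Fin n → ℕ) → ℝ) {ι : Type*} (s : Finset ι)
    (f : ι → MvPolynomial (Fin n) ℝ) :
    Ly y (∑ i ∈ s, f i) = ∑ i ∈ s, Ly y (f i) := by
  classical
  induction s using Finset.induction_on with
  | empty => simp [Ly_zero]
  | insert _ _ h ih => rw [Finset.sum_insert h, Finset.sum_insert h, Ly_add, ih]

lemma Ly_sub (y : (Fin n → ℕ) → ℝ) (p q : MvPolynomial (Fin n) ℝ) :
    Ly y (p - q) = Ly y p - Ly y q := by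
  have : p - q = p + (-1 : ℝ) • q := by ring_nf; rw [neg_one_smul]; ring
  rw [this, Ly_add, Ly_smul]; ring

/-! #### `mono` lemmas -/

lemma mono_eq_monomial (g : Fin n → ℕ) :
    mono g = monomial (Finsupp.equivFunOnFinite.symm g) 1 := by
  classical
  rw [← MvPolynomial.prod_X_pow_eq_monomial, mono]
  have hcongr : ∀ i ∈ Finset.univ, (X i : MvPolynomial (Fin n) ℝ) ^ g i
      = X i ^ (Finsupp.equivFunOnFinite.symm g) i :=
    fun i _ => by rw [coe_symmFun]
  rw [Finset.prod_congr rfl hcongr]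
  exact (Finset.prod_subset (Finset.subset_univ _) fun i _ hi => by
    rw [Finsupp.notMem_support_iff.mp hi, pow_zero]).symm

lemma Ly_mono (y : (Fin n → ℕ) → ℝ) (g : Fin n → ℕ) : Ly y (mono g) = y g := by
  rw [mono_eq_monomial, Ly]
  rw [MvPolynomial.support_monomial]
  simp [MvPolynomial.coeff_monomial, coe_symmFun]

lemma mono_mul (a b : Fin n → ℕ) : mono a * mono b = mono (a + b) := by
  rw [mono, mono, mono, ← Finset.prod_mul_distrib]
  refine Finset.prod_congr rfl fun i _ => ?_
  rw [← pow_add]; rfl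

lemma coeffOf_mono (g γ : Fin n → ℕ) :
    coeffOf (mono g) γ = if g = γ then 1 else 0 := by
  rw [coeffOf, mono_eq_monomial, MvPolynomial.coeff_monomial]
  simp [Finsupp.equivFunOnFinite.symm.injective.eq_iff]

lemma coeffOf_sum {ι : Type*} (s : Finset ι) (f : ι → MvPolynomial (Fin n) ℝ)
    (γ : Fin n → ℕ) : coeffOf (∑ i ∈ s, f i) γ = ∑ i ∈ s, coeffOf (f i) γ := by
  simp [coeffOf, MvPolynomial.coeff_sum]

lemma coeffOf_C_mul (c : ℝ) (p : MvPolynomial (Fin n) ℝ) (γ : Fin n → ℕ) :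
    coeffOf (C c * p) γ = c * coeffOf p γ := by
  simp [coeffOf, MvPolynomial.coeff_C_mul]

lemma coeffOf_sub (p q : MvPolynomial (Fin n) ℝ) (γ : Fin n → ℕ) :
    coeffOf (p - q) γ = coeffOf p γ - coeffOf q γ := by
  simp [coeffOf, MvPolynomial.coeff_sub]

/-! #### Expansion of products of univariate polynomials in separate variables -/

lemma aeval_X_expand (i : Fin n) (f : Polynomial ℝ) :
    Polynomial.aeval (X i : MvPolynomial (Fin n) ℝ) f
      = ∑ k ∈ f.support, C (f.coeff k) * X i ^ k := by
  conv_lhs => rw [← Polynomial.sum_monomial_eq f]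
  rw [Polynomial.sum, map_sum]
  refine Finset.sum_congr rfl fun k _ => ?_
  rw [Polynomial.aeval_monomial, MvPolynomial.algebraMap_eq]

lemma prod_aeval_expand (f : Fin n → Polynomial ℝ) :
    (∏ i, Polynomial.aeval (X i : MvPolynomial (Fin n) ℝ) (f i))
      = ∑ g ∈ Fintype.piFinset (fun i => (f i).support),
          C (∏ i, (f i).coeff (g i)) * mono g := by
  classical
  simp_rw [aeval_X_expand]
  rw [Finset.prod_univ_sum]
  refine Finset.sum_congr rfl fun g _ => ?_
  rw [mono, Finset.prod_mul_distrib, ← map_prod]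

lemma coeffOf_prod_aeval (f : Fin n → Polynomial ℝ) (γ : Fin n → ℕ) :
    coeffOf (∏ i, Polynomial.aeval (X i : MvPolynomial (Fin n) ℝ) (f i)) γ
      = if ∀ i, γ i ∈ (f i).support then ∏ i, (f i).coeff (γ i) else 0 := by
  classical
  rw [prod_aeval_expand, coeffOf_sum]
  simp only [coeffOf_C_mul, coeffOf_mono, mul_ite, mul_one, mul_zero]
  rw [Finset.sum_ite_eq' (Fintype.piFinset fun i => (f i).support) γ
    (fun g => ∏ i, (f i).coeff (g i))]
  simp [Fintype.mem_piFinset]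

lemma Ly_prod_aeval {d : ℕ} (y : (Fin n → ℕ) → ℝ) (hprod : ProductForm n d y)
    (f : Fin n → Polynomial ℝ) (hdeg : ∑ i, (f i).natDegree ≤ 2 * d) :
    Ly y (∏ i, Polynomial.aeval (X i : MvPolynomial (Fin n) ℝ) (f i))
      = ∏ i, L1 (fun k => y (Pi.single i k)) (f i) := by
  classical
  rw [prod_aeval_expand, Ly_sum]
  have key : ∀ g ∈ Fintype.piFinset (fun i => (f i).support),
      Ly y (C (∏ i, (f i).coeff (g i)) * mono g)
        = ∏ i, (f i).coeff (g i) * y (Pi.single i (g i)) := by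
    intro g hg
    have hgle : degSum g ≤ 2 * d := by
      refine le_trans ?_ hdeg
      refine Finset.sum_le_sum fun i _ => Polynomial.le_natDegree_of_ne_zero ?_
      exact Polynomial.mem_support_iff.mp (Fintype.mem_piFinset.mp hg i)
    rw [← MvPolynomial.smul_eq_C_mul, Ly_smul, Ly_mono, hprod g hgle,
      ← Finset.prod_mul_distrib]
  rw [Finset.sum_congr rfl key,
    ← Finset.prod_univ_sum (fun i => (f i).support)
      (fun i k => (f i).coeff k * y (Pi.single i k))]
  rfl

/-! #### Linearity of `L1` -/

lemma L1_eq_sum_subset (m : ℕ → ℝ) (p : Polynomial ℝ) (s : Finset ℕ)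
    (h : p.support ⊆ s) : L1 m p = ∑ k ∈ s, p.coeff k * m k := by
  rw [L1]
  exact Finset.sum_subset h fun k _ hk => by
    simp [Polynomial.notMem_support_iff.mp hk]

lemma L1_zero (m : ℕ → ℝ) : L1 m 0 = 0 := by simp [L1]

lemma L1_add (m : ℕ → ℝ) (p q : Polynomial ℝ) : L1 m (p + q) = L1 m p + L1 m q := by
  classical
  rw [L1_eq_sum_subset m (p + q) (p.support ∪ q.support) Polynomial.support_add,
    L1_eq_sum_subset m p (p.support ∪ q.support) Finset.subset_union_left,
    L1_eq_sum_subset m q (p.support ∪ q.support) Finset.subset_union_right,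
    ← Finset.sum_add_distrib]
  refine Finset.sum_congr rfl fun k _ => ?_
  rw [Polynomial.coeff_add]; ring

lemma L1_smul (m : ℕ → ℝ) (c : ℝ) (p : Polynomial ℝ) : L1 m (c • p) = c * L1 m p := by
  rw [L1_eq_sum_subset m (c • p) p.support (Polynomial.support_smul c p), L1,
    Finset.mul_sum]
  refine Finset.sum_congr rfl fun k _ => ?_
  rw [Polynomial.coeff_smul]; simp [mul_assoc]

lemma L1_sum (m : ℕ → ℝ) {ι : Type*} (s : Finset ι) (f : ι → Polynomial ℝ) :
    L1 m (∑ i ∈ s, f i) = ∑ i ∈ s, L1 m (f i) := by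
  classical
  induction s using Finset.induction_on with
  | empty => simp [L1_zero]
  | insert _ _ h ih => rw [Finset.sum_insert h, Finset.sum_insert h, L1_add, ih]

lemma L1_mul_expand (m : ℕ → ℝ) (h g : Polynomial ℝ) :
    L1 m (h * g) = ∑ k ∈ g.support, g.coeff k * L1 m (h * Polynomial.X ^ k) := by
  conv_lhs => rw [← Polynomial.sum_monomial_eq g]
  rw [Polynomial.sum, Finset.mul_sum, L1_sum]
  refine Finset.sum_congr rfl fun k _ => ?_
  rw [← Polynomial.smul_X_eq_monomial, mul_smul_comm, L1_smul]

/-! #### Multivariate bilinear expansion -/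

lemma Ly_mul_expand (y : (Fin n → ℕ) → ℝ) (h g : MvPolynomial (Fin n) ℝ) :
    Ly y (h * g) = ∑ m ∈ g.support, g.coeff m * Ly y (h * mono ⇑m) := by
  conv_lhs => rw [← MvPolynomial.support_sum_monomial_coeff g]
  rw [Finset.mul_sum, Ly_sum]
  refine Finset.sum_congr rfl fun m _ => ?_
  have hmono : (monomial m) (MvPolynomial.coeff m g) = (MvPolynomial.coeff m g) • mono ⇑m := by
    rw [mono_eq_monomial, Finsupp.equivFunOnFinite_symm_coe, MvPolynomial.smul_monomial,
      smul_eq_mul, mul_one]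
  rw [hmono, mul_smul_comm, Ly_smul]

/-! #### Univariate orthogonality against monomials -/

lemma L1_q_orthoX {d : ℕ} {m : ℕ → ℝ} {q : ℕ → Polynomial ℝ}
    (hq : IsONFamily1 d m q) :
    ∀ j k, j < k → k ≤ d → L1 m (q k * Polynomial.X ^ j) = 0 := by
  intro j
  induction j using Nat.strong_induction_on with
  | _ j ih =>
    intro k hjk hkd
    have hjd : j ≤ d := le_trans (le_of_lt hjk) hkd
    have hapos := hq.lead j hjd
    set a := (q j).coeff j with ha
    set r := Polynomial.X ^ j - a⁻¹ • q j with hr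
    have hrsupp : ∀ l ∈ r.support, l < j := by
      intro l hl
      by_contra hlj
      push_neg at hlj
      apply Polynomial.mem_support_iff.mp hl
      rcases eq_or_lt_of_le hlj with hcase | hcase
      · rw [hr, Polynomial.coeff_sub, Polynomial.coeff_smul, Polynomial.coeff_X_pow,
          ← hcase, if_pos rfl]
        rw [← hcase] at *
        rw [← ha, smul_eq_mul, inv_mul_cancel₀ (ne_of_gt hapos), sub_self]
      · rw [hr, Polynomial.coeff_sub, Polynomial.coeff_smul, Polynomial.coeff_X_pow,
          if_neg (Nat.ne_of_gt hcase),
          Polynomial.coeff_eq_zero_of_natDegree_lt (lt_of_le_of_lt (hq.degle j hjd) hcase)]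
        simp
    have hXj : (Polynomial.X ^ j : Polynomial ℝ) = a⁻¹ • q j + r := by
      rw [hr]; ring
    rw [hXj, mul_add, L1_add, mul_smul_comm, L1_smul, hq.orth k j hkd hjd,
      if_neg (Nat.ne_of_gt hjk), mul_zero, zero_add, L1_mul_expand]
    refine Finset.sum_eq_zero fun l hl => ?_
    rw [ih l (hrsupp l hl) k (lt_trans (hrsupp l hl) hjk) hkd, mul_zero]

lemma L1_q_self {d : ℕ} {m : ℕ → ℝ} {q : ℕ → Polynomial ℝ}
    (hq : IsONFamily1 d m q) (k : ℕ) (hk : k ≤ d) :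
    L1 m (q k * Polynomial.X ^ k) = ((q k).coeff k)⁻¹ := by
  have h1 : L1 m (q k * q k) = 1 := by simpa using hq.orth k k hk hk
  rw [L1_mul_expand] at h1
  have hz1 : ∀ l ∈ (q k).support, l ≠ k →
      (q k).coeff l * L1 m (q k * Polynomial.X ^ l) = 0 := by
    intro l hl hne
    have hlk : l < k := lt_of_le_of_ne
      (le_trans (Polynomial.le_natDegree_of_ne_zero (Polynomial.mem_support_iff.mp hl))
        (hq.degle k hk)) hne
    rw [L1_q_orthoX hq l k hlk hk, mul_zero]
  have hz2 : k ∉ (q k).support →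
      (q k).coeff k * L1 m (q k * Polynomial.X ^ k) = 0 := by
    intro hk'
    rw [Polynomial.notMem_support_iff.mp hk', zero_mul]
  rw [Finset.sum_eq_single k hz1 hz2] at h1
  rw [mul_comm] at h1
  exact eq_inv_of_mul_eq_one_left h1

/-! #### glex order lemmas -/

lemma glexLE_degSum {α β : Fin n → ℕ} (h : glexLE α β) : degSum α ≤ degSum β := by
  rcases h with (h | h) | rfl
  · exact le_of_lt h
  · exact le_of_eq h.1
  · exact le_rfl

lemma glexLT_exists {α β : Fin n → ℕ} (h : glexLT β α) : ∃ i, β i < α i := by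
  rcases h with h | h
  · by_contra hc
    push_neg at hc
    exact absurd (Finset.sum_le_sum fun i _ => hc i) (not_le.mpr h)
  · obtain ⟨i, _, hi⟩ := h.2
    exact ⟨i, hi⟩

lemma glexLE_of_le {α β : Fin n → ℕ} (h : ∀ i, β i ≤ α i) : glexLE β α := by
  by_cases heq : β = α
  · exact Or.inr heq
  · obtain ⟨i, hi⟩ := Function.ne_iff.mp heq
    exact Or.inl (Or.inl (Finset.sum_lt_sum (fun i _ => h i)
      ⟨i, Finset.mem_univ i, lt_of_le_of_ne (h i) hi⟩))

/-! #### Positivity of the quadratic form -/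

lemma midx_sum {d : ℕ} (f : MvPolynomial (Fin n) ℝ)
    (hsupp : ∀ m ∈ f.support, degSum ⇑m ≤ d)
    (G : (Fin n → ℕ) → ℝ) (hG : ∀ γ, coeffOf f γ = 0 → G γ = 0) :
    ∑ a : MIdx n d, G a.1 = ∑ m ∈ f.support, G ⇑m := by
  classical
  have hd0 : degSum (0 : Fin n → ℕ) ≤ d := by simp [degSum]
  set e : (Fin n →₀ ℕ) → MIdx n d :=
    fun m => if h : degSum ⇑m ≤ d then ⟨⇑m, h⟩ else ⟨0, hd0⟩ with he
  have heval : ∀ m (hm : m ∈ f.support), e m = ⟨⇑m, hsupp m hm⟩ := by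
    intro m hm; rw [he]; simp only; rw [dif_pos (hsupp m hm)]
  have h1 : ∑ a : MIdx n d, G a.1 = ∑ a ∈ f.support.image e, G a.1 := by
    refine (Finset.sum_subset (Finset.subset_univ _) fun a _ ha => ?_).symm
    refine hG a.1 ?_
    by_contra hco
    have hm : Finsupp.equivFunOnFinite.symm a.1 ∈ f.support :=
      MvPolynomial.mem_support_iff.mpr hco
    refine ha (Finset.mem_image.mpr ⟨_, hm, ?_⟩)
    rw [heval _ hm]
    exact Subtype.ext (coe_symmFun a.1)
  have h2 : ∑ a ∈ f.support.image e, G a.1 = ∑ m ∈ f.support, G (e m).1 := by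
    refine Finset.sum_image fun m hm m' hm' hee => ?_
    have hcoe := congrArg Subtype.val hee
    rw [heval m hm, heval m' hm'] at hcoe
    exact DFunLike.coe_injective hcoe
  rw [h1, h2]
  refine Finset.sum_congr rfl fun m hm => ?_
  rw [heval m hm]

lemma Ly_sq_pos {d : ℕ} (y : (Fin n → ℕ) → ℝ) (hpd : (momMat n d y).PosDef)
    (f : MvPolynomial (Fin n) ℝ) (hsupp : ∀ m ∈ f.support, degSum ⇑m ≤ d)
    (hf : f ≠ 0) : 0 < Ly y (f * f) := by
  classical
  set v : MIdx n d → ℝ := fun a => coeffOf f a.1 with hv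
  have hvne : v ≠ 0 := by
    obtain ⟨m, hm⟩ := MvPolynomial.support_nonempty.mpr hf
    intro h0
    have h1 : v ⟨⇑m, hsupp m hm⟩ = 0 := congrFun h0 _
    rw [hv] at h1
    simp only at h1
    rw [coeffOf_eq_coeff] at h1
    exact MvPolynomial.mem_support_iff.mp hm h1
  have hinner : ∀ γ : Fin n → ℕ, Ly y (f * mono γ)
      = ∑ b : MIdx n d, y (γ + b.1) * v b := by
    intro γ
    rw [mul_comm, Ly_mul_expand]
    have hstep := midx_sum f hsupp (fun δ => y (γ + δ) * coeffOf f δ)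
      (fun δ hδ => by show y (γ + δ) * coeffOf f δ = 0; rw [hδ, mul_zero])
    rw [show (∑ b : MIdx n d, y (γ + b.1) * v b)
        = ∑ m ∈ f.support, y (γ + ⇑m) * coeffOf f ⇑m from hstep]
    refine Finset.sum_congr rfl fun m _ => ?_
    rw [mono_mul, Ly_mono, coeffOf_eq_coeff]
    ring
  have hexp : Ly y (f * f)
      = ∑ a : MIdx n d, v a * ∑ b : MIdx n d, y (a.1 + b.1) * v b := by
    have hstep := midx_sum f hsupp
      (fun γ => coeffOf f γ * Ly y (f * mono γ))
      (fun γ hγ => by show coeffOf f γ * Ly y (f * mono γ) = 0; rw [hγ, zero_mul])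
    rw [Ly_mul_expand]
    have hmid : (∑ m ∈ f.support, MvPolynomial.coeff m f * Ly y (f * mono ⇑m))
        = ∑ m ∈ f.support, coeffOf f ⇑m * Ly y (f * mono ⇑m) := by
      refine Finset.sum_congr rfl fun m _ => ?_
      rw [coeffOf_eq_coeff]
    rw [hmid]
    rw [show (∑ m ∈ f.support, coeffOf f ⇑m * Ly y (f * mono ⇑m))
        = ∑ a : MIdx n d, coeffOf f a.1 * Ly y (f * mono a.1) from hstep.symm]
    refine Finset.sum_congr rfl fun a _ => ?_
    rw [hinner a.1]
  have hquad : v ⬝ᵥ (momMat n d y).mulVec v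
      = ∑ a : MIdx n d, v a * ∑ b : MIdx n d, y (a.1 + b.1) * v b := by
    simp [dotProduct, Matrix.mulVec, momMat]
  have hpos : 0 < v ⬝ᵥ (momMat n d y).mulVec v := by
    have := hpd.dotProduct_mulVec_pos hvne; rwa [star_trivial] at this
  rw [hquad] at hpos
  rw [hexp]
  exact hpos

end Aux

/-- **Factorization (3.3).** Under the product form property, the multivariate orthonormal
polynomials are products of the univariate orthonormal polynomials of the marginal moment
sequences: `p_α(X) = q^{(1)}_{α₁}(X₁)⋯q^{(n)}_{αₙ}(Xₙ)`. -/
theorem stmt3 (n d : ℕ) (hn : 1 ≤ n) (y : (Fin n → ℕ) → ℝ) (hy0 : y 0 = 1)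
    (hpd : (momMat n d y).PosDef) (hprod : ProductForm n d y)
    (p : (Fin n → ℕ) → MvPolynomial (Fin n) ℝ) (hp : IsONFamily n d y p)
    (q : Fin n → ℕ → Polynomial ℝ)
    (hq : ∀ i, IsONFamily1 d (fun k => y (Pi.single i k)) (q i))
    (α : Fin n → ℕ) (hα : degSum α ≤ d) :
    p α = ∏ i, Polynomial.aeval (X i : MvPolynomial (Fin n) ℝ) (q i (α i)) := by
  classical
  set f : Fin n → Polynomial ℝ := fun i => q i (α i) with hf
  set P : MvPolynomial (Fin n) ℝ := ∏ i, Polynomial.aeval (X i) (f i) with hP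
  have hαid : ∀ i, α i ≤ d := fun i => le_trans (apply_le_degSum α i) hα
  have hdegf : ∀ i, (f i).natDegree ≤ α i := fun i => (hq i).degle (α i) (hαid i)
  have hlead : ∀ i, 0 < (f i).coeff (α i) := fun i => (hq i).lead (α i) (hαid i)
  set c : ℝ := ∏ i, (f i).coeff (α i) with hc
  have hcpos : 0 < c := Finset.prod_pos fun i _ => hlead i
  -- support facts for P
  have hPco : ∀ γ, coeffOf P γ ≠ 0 → ∀ i, γ i ≤ α i := by
    intro γ hγ i
    rw [hP, coeffOf_prod_aeval] at hγ
    by_cases hmem : ∀ j, γ j ∈ (f j).support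
    · exact le_trans (Polynomial.le_natDegree_of_ne_zero
        (Polynomial.mem_support_iff.mp (hmem i))) (hdegf i)
    · rw [if_neg hmem] at hγ; exact absurd rfl hγ
  have hPglex : ∀ γ, coeffOf P γ ≠ 0 → glexLE γ α := fun γ hγ =>
    glexLE_of_le (hPco γ hγ)
  have hPα : coeffOf P α = c := by
    rw [hP, coeffOf_prod_aeval, if_pos fun i =>
      Polynomial.mem_support_iff.mpr (ne_of_gt (hlead i))]
  -- Ly (P * P) = 1
  have hPP : Ly y (P * P) = 1 := by
    rw [hP, ← Finset.prod_mul_distrib,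
      Finset.prod_congr rfl fun i (_ : i ∈ Finset.univ) =>
        (map_mul (Polynomial.aeval (X i : MvPolynomial (Fin n) ℝ)) (f i) (f i)).symm,
      Ly_prod_aeval y hprod _ ?_]
    · refine Finset.prod_eq_one fun i _ => ?_
      have := (hq i).orth (α i) (α i) (hαid i) (hαid i)
      rw [if_pos rfl] at this
      exact this
    · refine le_trans (Finset.sum_le_sum fun i _ =>
        le_trans Polynomial.natDegree_mul_le (add_le_add (hdegf i) (hdegf i))) ?_
      rw [Finset.sum_add_distrib]
      have hh : (∑ i, α i) ≤ d := hα
      omega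
  -- Ly (P * mono β)
  have hPmono : ∀ β : Fin n → ℕ, degSum β ≤ d →
      Ly y (P * mono β)
        = ∏ i, L1 (fun k => y (Pi.single i k)) (f i * Polynomial.X ^ β i) := by
    intro β hβ
    have hfactor : ∀ i : Fin n,
        Polynomial.aeval (X i : MvPolynomial (Fin n) ℝ) (f i) * X i ^ β i
          = Polynomial.aeval (X i : MvPolynomial (Fin n) ℝ) (f i * Polynomial.X ^ β i) := by
      intro i
      rw [_root_.map_mul, map_pow, Polynomial.aeval_X]
    rw [hP, mono, ← Finset.prod_mul_distrib,
      Finset.prod_congr rfl fun i (_ : i ∈ Finset.univ) => hfactor i,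
      Ly_prod_aeval y hprod _ ?_]
    refine le_trans (Finset.sum_le_sum fun i _ =>
      le_trans Polynomial.natDegree_mul_le
        (add_le_add (hdegf i) (le_of_eq (Polynomial.natDegree_X_pow (β i))))) ?_
    rw [Finset.sum_add_distrib]
    have hh1 : (∑ i, α i) ≤ d := hα
    have hh2 : (∑ i, β i) ≤ d := hβ
    omega
  have hPmonoα : Ly y (P * mono α) = c⁻¹ := by
    rw [hPmono α hα, hc, ← Finset.prod_inv_distrib]
    exact Finset.prod_congr rfl fun i _ => L1_q_self (hq i) (α i) (hαid i)
  have hPmonolt : ∀ β, glexLT β α → Ly y (P * mono β) = 0 := by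
    intro β hβ
    have hβd : degSum β ≤ d := le_trans (glexLE_degSum (Or.inl hβ)) hα
    rw [hPmono β hβd]
    obtain ⟨i, hi⟩ := glexLT_exists hβ
    exact Finset.prod_eq_zero (Finset.mem_univ i)
      (L1_q_orthoX (hq i) (β i) (α i) hi (hαid i))
  -- key expansion lemma
  have hkey : ∀ (h g : MvPolynomial (Fin n) ℝ) (s : ℝ),
      (∀ γ, coeffOf g γ ≠ 0 → glexLE γ α) →
      (∀ β, glexLT β α → Ly y (h * mono β) = 0) →
      Ly y (h * mono α) = s →
      Ly y (h * g) = coeffOf g α * s := by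
    intro h g s hgsupp hlow hs
    rw [Ly_mul_expand]
    have hz1 : ∀ m ∈ g.support, m ≠ Finsupp.equivFunOnFinite.symm α →
        g.coeff m * Ly y (h * mono ⇑m) = 0 := by
      intro m hm hne
      have h1 : coeffOf g ⇑m ≠ 0 := by
        rw [coeffOf_eq_coeff]; exact MvPolynomial.mem_support_iff.mp hm
      rcases hgsupp ⇑m h1 with hlt | heq
      · rw [hlow ⇑m hlt, mul_zero]
      · exfalso
        apply hne
        rw [← heq, Finsupp.equivFunOnFinite_symm_coe]
    have hz2 : Finsupp.equivFunOnFinite.symm α ∉ g.support →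
        g.coeff (Finsupp.equivFunOnFinite.symm α)
          * Ly y (h * mono ⇑(Finsupp.equivFunOnFinite.symm α)) = 0 := by
      intro hnm
      rw [MvPolynomial.notMem_support_iff.mp hnm, zero_mul]
    rw [Finset.sum_eq_single (Finsupp.equivFunOnFinite.symm α) hz1 hz2]
    rw [coe_symmFun, hs, coeffOf]
  -- facts about p α
  have hplow : ∀ β, glexLT β α → Ly y (p α * mono β) = 0 := fun β hβ =>
    hp.lower α β hα (le_trans (glexLE_degSum (Or.inl hβ)) hα) hβ
  set t : ℝ := Ly y (p α * mono α) with ht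
  have htpos : 0 < t := hp.pos α hα
  have hpp1 : Ly y (p α * p α) = 1 := by
    have := hp.orth α α hα hα
    rw [if_pos rfl] at this
    exact this
  have h1 : coeffOf (p α) α * t = 1 := by
    rw [← hkey (p α) (p α) t (hp.span α hα) hplow rfl]
    exact hpp1
  have h2 : Ly y (p α * P) = c * t := by
    rw [hkey (p α) P t hPglex hplow rfl, hPα]
  have h3 : Ly y (P * p α) = coeffOf (p α) α * c⁻¹ :=
    hkey P (p α) c⁻¹ (hp.span α hα) hPmonolt hPmonoα
  have htc : coeffOf (p α) α = t⁻¹ := eq_inv_of_mul_eq_one_left h1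
  -- the difference r
  set r : MvPolynomial (Fin n) ℝ := p α - P with hr
  have hLyrr : Ly y (r * r) ≤ 0 := by
    have hexpand : r * r = p α * p α - p α * P - (P * p α - P * P) := by
      rw [hr]; ring
    rw [hexpand, Ly_sub, Ly_sub, Ly_sub, hpp1, h2, h3, hPP, htc]
    have hu : 0 < c * t := mul_pos hcpos htpos
    have hinv : t⁻¹ * c⁻¹ = (c * t)⁻¹ := by
      rw [mul_inv]; ring
    rw [hinv]
    nlinarith [sq_nonneg (c * t - 1), hu, mul_pos hu (inv_pos.mpr hu),
      mul_inv_cancel₀ (ne_of_gt hu)]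
  have hrzero : r = 0 := by
    by_contra hrne
    have hsupp : ∀ m ∈ r.support, degSum ⇑m ≤ d := by
      intro m hm
      have hco : coeffOf r ⇑m ≠ 0 := by
        rw [coeffOf_eq_coeff]; exact MvPolynomial.mem_support_iff.mp hm
      rw [hr, coeffOf_sub] at hco
      have : coeffOf (p α) ⇑m ≠ 0 ∨ coeffOf P ⇑m ≠ 0 := by
        by_contra hb
        push_neg at hb
        rw [hb.1, hb.2, sub_zero] at hco
        exact hco rfl
      rcases this with hcase | hcase
      · exact le_trans (glexLE_degSum (hp.span α hα ⇑m hcase)) hα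
      · exact le_trans (glexLE_degSum (hPglex ⇑m hcase)) hα
    exact absurd (Ly_sq_pos y hpd r hsupp hrne) (not_lt.mpr hLyrr)
  rw [← sub_eq_zero]
  exact hrzero

end Paper
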